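/- arXiv:1911.03634 — 5 statements merged into one kernel-verified Lean document; each statement's English description precedes it below -/
import Mathlib

section
/- If S_1, S_2 ⊆ P({1,...,n}) \ {∅} and for every sequence of sets A (over some fixed infinite ambient type, e.g. ℕ) we have F_{S_1}(A) = F_{S_2}(A), then S_1 = S_2. -/
open Finset

/-- `G_J(A)`: intersection of the `A j` for `j ∈ J` with the complements
(relative to the union of all the `A i`) of the `A j` for `j ∉ J`. -/
def gset {α : Type*} {n : ℕ} (A : Fin n → Set α) (J : Finset (Fin n)) : Set α :=
  (⋂ j ∈ J, A j) ∩ ⋂ j ∈ Jᶜ, ((⋃ i, A i) \ A j)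

/-- `F_S(A) = ⋃_{J ∈ S} G_J(A)`. -/
def fset {α : Type*} {n : ℕ} (A : Fin n → Set α) (S : Finset (Finset (Fin n))) : Set α :=
  ⋃ J ∈ S, gset A J

/-- `i_{n,k}(A)`: the sum over all `k`-element subsets `J` of the index set of
the cardinality of `⋂_{j ∈ J} A j`. -/
noncomputable def icard {α : Type*} {n : ℕ} (A : Fin n → Set α) (k : ℕ) : ℕ :=
  ∑ J ∈ Finset.powersetCard k (Finset.univ : Finset (Fin n)), (⋂ j ∈ J, A j).ncard

/-- `σ_{n,j}(A)`: the sum over all `j`-element subsets `I` of the index set of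
the cardinality of `G_I(A)`. -/
noncomputable def sigmacard {α : Type*} {n : ℕ} (A : Fin n → Set α) (j : ℕ) : ℕ :=
  ∑ I ∈ Finset.powersetCard j (Finset.univ : Finset (Fin n)), (gset A I).ncard

/-! For nonempty `J`, a point lies in `G_J(A)` exactly when `J` is the set of indices `j`
with `x ∈ A j`. Hence when `∅ ∉ S`, the family with `A j = ℕ` for `j ∈ J` and `A j = ∅`
otherwise has `F_S(A) = ℕ` if `J ∈ S` and `F_S(A) = ∅` if not, so `F_S` determines `S`. -/

theorem mem_gset_iff {α : Type*} {n : ℕ} {A : Fin n → Set α} {J : Finset (Fin n)}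
    (hJ : J.Nonempty) {x : α} : x ∈ gset A J ↔ ∀ j, x ∈ A j ↔ j ∈ J := by
  obtain ⟨j₀, hj₀⟩ := hJ
  simp only [gset, Set.mem_inter_iff, Set.mem_iInter, Set.mem_sdiff, Set.mem_iUnion,
    Finset.mem_compl]
  constructor
  · rintro ⟨hin, hout⟩ j
    exact ⟨fun hx => by_contra fun hj => (hout j hj).2 hx, hin j⟩
  · intro hiff
    exact ⟨fun j => (hiff j).2, fun j hj => ⟨⟨j₀, (hiff j₀).2 hj₀⟩, mt (hiff j).1 hj⟩⟩

theorem mem_fset_iff {α : Type*} {n : ℕ} {A : Fin n → Set α} {S : Finset (Finset (Fin n))}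
    (hS : ∅ ∉ S) {x : α} : x ∈ fset A S ↔ ∃ J ∈ S, ∀ j, x ∈ A j ↔ j ∈ J := by
  simp only [fset, Set.mem_iUnion, exists_prop]
  refine exists_congr fun J => and_congr_right fun hJS => mem_gset_iff ?_
  exact Finset.nonempty_iff_ne_empty.2 (ne_of_mem_of_not_mem hJS hS)

theorem stmt_9 {n : ℕ} (S₁ S₂ : Finset (Finset (Fin n)))
    (h₁ : ∅ ∉ S₁) (h₂ : ∅ ∉ S₂)
    (h : ∀ A : Fin n → Set ℕ, fset A S₁ = fset A S₂) :
    S₁ = S₂ := by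
  ext J
  let A : Fin n → Set ℕ := fun j => {_x | j ∈ J}
  have mem_fset_A : ∀ S, ∅ ∉ S → (0 ∈ fset A S ↔ J ∈ S) := fun S hS => by
    simp only [mem_fset_iff hS, A, Set.mem_ofPred_eq, ← Finset.ext_iff]
    exact ⟨fun ⟨I, hI, hJI⟩ => hJI ▸ hI, fun hJ => ⟨J, hJ, rfl⟩⟩
  rw [← mem_fset_A S₁ h₁, ← mem_fset_A S₂ h₂, h A]
end

section
/- For any sequence of finite sets A_1,...,A_n and 1 ≤ k ≤ n, i_{n,k}(A) = Σ_{j=k}^{n} C(j,k) · σ_{n,j}(A), where σ_{n,j}(A) = Σ_{|I|=j} |G_I(A)|. -/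
/-!
Every point `x` of `⋃ i, A i` lies in exactly one `G_I(A)`, namely for `I = {i | x ∈ A i}`,
and it lies in `⋂ j ∈ J, A j` exactly when `J ⊆ I`. Hence, for `J ≠ ∅`, `⋂ j ∈ J, A j` is the
disjoint union of the `G_I(A)` with `I ⊇ J`, and in `i_{n,k}(A)` each point of `G_I(A)` is
counted once for every `k`-subset of `I`, that is `C(|I|, k)` times.
-/

open Finset

open Function

theorem Finset.sum_powersetCard_sum_superset {ι M : Type*} [DecidableEq ι] [AddCommMonoid M]
    (s : Finset ι) (k : ℕ) (f : Finset ι → M) :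
    ∑ J ∈ powersetCard k s, ∑ I ∈ s.powerset with J ⊆ I, f I
      = ∑ I ∈ s.powerset, (#I).choose k • f I := by
  simp_rw [sum_filter]
  rw [sum_comm]
  refine sum_congr rfl fun I hI => ?_
  have hfilter : {J ∈ powersetCard k s | J ⊆ I} = powersetCard k I := by
    ext J
    simp only [mem_filter, mem_powersetCard]
    exact ⟨fun ⟨⟨_, hJ⟩, hJI⟩ => ⟨hJI, hJ⟩,
      fun ⟨hJI, hJ⟩ => ⟨⟨hJI.trans (mem_powerset.1 hI), hJ⟩, hJI⟩⟩
  rw [← sum_filter, sum_const, hfilter, card_powersetCard]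

section

variable {α : Type*} {n : ℕ} (A : Fin n → Set α)

lemma gset_subset_iInter (I : Finset (Fin n)) : gset A I ⊆ ⋂ i ∈ I, A i :=
  Set.inter_subset_left

lemma pairwise_disjoint_gset : Pairwise (Disjoint on gset A) := by
  have hmem : ∀ {I I' : Finset (Fin n)} {x i},
      x ∈ gset A I → x ∈ gset A I' → i ∈ I → i ∈ I' :=
    fun {I I' x i} hx hx' hi => by
      by_contra hi'
      have hxi : x ∈ A i := Set.mem_iInter₂.1 hx.1 i hi
      exact (Set.mem_iInter₂.1 hx'.2 i (mem_compl.2 hi')).2 hxi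
  intro I I' hne
  refine Set.disjoint_left.2 fun x hx hx' => hne ?_
  ext i
  exact ⟨hmem hx hx', hmem hx' hx⟩

lemma mem_gset_filter_mem {x : α} [DecidablePred (x ∈ A ·)] (hx : x ∈ ⋃ i, A i) :
    x ∈ gset A (univ.filter (x ∈ A ·)) := by
  simp only [gset, Set.mem_inter_iff, Set.mem_iInter, Set.mem_sdiff, mem_compl, mem_filter,
    mem_univ, true_and]
  exact ⟨fun _ => id, fun _ hi => ⟨hx, hi⟩⟩

lemma iInter_eq_biUnion_gset {J : Finset (Fin n)} (hJ : J.Nonempty) :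
    ⋂ j ∈ J, A j = ⋃ I ∈ univ.powerset.filter (J ⊆ ·), gset A I := by
  classical
  ext x
  simp only [Set.mem_iUnion, mem_filter, mem_powerset, subset_univ, true_and, exists_prop]
  constructor
  · intro hx
    have hxJ : ∀ j ∈ J, x ∈ A j := Set.mem_iInter₂.1 hx
    obtain ⟨j, hj⟩ := hJ
    refine ⟨univ.filter (x ∈ A ·), fun i hi => by simpa using hxJ i hi, ?_⟩
    exact mem_gset_filter_mem A (Set.mem_iUnion.2 ⟨j, hxJ j hj⟩)
  · rintro ⟨I, hJI, hx⟩
    exact Set.biInter_subset_biInter_left (fun _ hj => hJI hj) (gset_subset_iInter A I hx)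

lemma ncard_iInter_eq_sum_ncard_gset (hA : ∀ i, (A i).Finite) {J : Finset (Fin n)}
    (hJ : J.Nonempty) :
    (⋂ j ∈ J, A j).ncard = ∑ I ∈ univ.powerset with J ⊆ I, (gset A I).ncard := by
  obtain ⟨j, hj⟩ := hJ
  have hfin : (⋂ j ∈ J, A j).Finite := (hA j).subset (Set.biInter_subset_of_mem hj)
  rw [iInter_eq_biUnion_gset A ⟨j, hj⟩, ← set_biUnion_coe,
    (finite_toSet _).ncard_biUnion _ ((pairwise_disjoint_gset A).set_pairwise _),
    finsum_mem_coe_finset]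
  intro I hI
  have hJI : J ⊆ I := (mem_filter.1 hI).2
  exact hfin.subset ((gset_subset_iInter A I).trans (Set.biInter_subset_biInter_left hJI))

end

theorem stmt_11_general {α : Type*} {n : ℕ} (A : Fin n → Set α) (hA : ∀ i, (A i).Finite)
    (k : ℕ) (hk1 : 1 ≤ k) :
    icard A k = ∑ j ∈ Finset.Icc k n, j.choose k * sigmacard A j := by
  have hJ : ∀ J ∈ powersetCard k (univ : Finset (Fin n)), J.Nonempty := fun J hJ =>
    card_pos.1 ((mem_powersetCard.1 hJ).2 ▸ hk1)
  calc icard A k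
      = ∑ J ∈ powersetCard k univ, ∑ I ∈ univ.powerset with J ⊆ I, (gset A I).ncard :=
        sum_congr rfl fun J hJk => ncard_iInter_eq_sum_ncard_gset A hA (hJ J hJk)
    _ = ∑ I ∈ univ.powerset, (#I).choose k * (gset A I).ncard :=
        sum_powersetCard_sum_superset _ k _
    _ = ∑ j ∈ range (n + 1), j.choose k * sigmacard A j := by
        rw [sum_powerset, card_univ, Fintype.card_fin]
        refine sum_congr rfl fun j _ => ?_
        rw [sigmacard, mul_sum]
        exact sum_congr rfl fun I hI => by rw [(mem_powersetCard.1 hI).2]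
    _ = ∑ j ∈ Icc k n, j.choose k * sigmacard A j := by
        refine (sum_subset (fun j hj => ?_) fun j hj hjk => ?_).symm
        · simp only [mem_Icc, mem_range] at hj ⊢
          omega
        · simp only [mem_Icc, mem_range] at hj hjk
          rw [Nat.choose_eq_zero_of_lt (by omega), zero_mul]

theorem stmt_11 {α : Type*} {n : ℕ} (A : Fin n → Set α) (hA : ∀ i, (A i).Finite)
    (k : ℕ) (hk1 : 1 ≤ k) (hk2 : k ≤ n) :
    icard A k = ∑ j ∈ Finset.Icc k n, j.choose k * sigmacard A j :=
  stmt_11_general A hA k hk1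
end

section
/- Let C ⊆ {1,...,n}, f its characteristic function, and S = {I ⊆ {1,...,n} : I ≠ ∅ and |I| ∈ C}. Then for any sequence of finite sets A_1,...,A_n, |F_S(A)| = Σ_{k=1}^{n} c_k · i_{n,k}(A), where c_k = Σ_{j=1}^{k} (-1)^{k-j} C(k,j) f(j) (as integers). -/
open Finset

/-!
A point `x` of `⋃ i, A i` lies in `G_I(A)` exactly for `I = {i | x ∈ A i}`, and in
`⋂ j ∈ J, A j` exactly when `J ⊆ {i | x ∈ A i}`. Counting points instead of sets, both sides
become sums over `x` of a function of `m = #{i | x ∈ A i} ∈ [1, n]`: the left side of `f m`, the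
right side of `∑ k, c_k * m.choose k`, which is again `f m` by binomial inversion.
-/

theorem sum_Icc_neg_one_pow_choose_mul_choose {j m n : ℕ} (hmn : m ≤ n) :
    ∑ k ∈ Icc j n, (-1 : ℤ) ^ (k - j) * k.choose j * m.choose k = if j = m then 1 else 0 := by
  rcases lt_or_ge m j with hmj | hjm
  · rw [if_neg hmj.ne']
    refine sum_eq_zero fun k hk => ?_
    rw [Nat.choose_eq_zero_of_lt (hmj.trans_le (mem_Icc.1 hk).1)]
    simp
  have hvanish : ∀ k ∈ Icc j n, k ∉ Ico j (m + 1) →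
      (-1 : ℤ) ^ (k - j) * k.choose j * m.choose k = 0 := by
    intro k hk hk'
    rw [Nat.choose_eq_zero_of_lt (n := m) (by simp at hk hk'; omega)]
    simp
  rw [← sum_subset (fun k hk => by simp at hk ⊢; omega) hvanish, sum_Ico_eq_sum_range]
  calc ∑ t ∈ range (m + 1 - j), (-1 : ℤ) ^ (j + t - j) * (j + t).choose j * m.choose (j + t)
      = m.choose j * ∑ t ∈ range (m - j + 1), (-1 : ℤ) ^ t * (m - j).choose t := by
        rw [mul_sum, show m + 1 - j = m - j + 1 by omega]
        refine sum_congr rfl fun t _ => ?_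
        have h := Nat.choose_mul (n := m) (k := j + t) (s := j) (by omega)
        rw [Nat.add_sub_cancel_left] at h ⊢
        have h' : ((m.choose (j + t) * (j + t).choose j : ℕ) : ℤ)
            = (m.choose j * (m - j).choose t : ℕ) := congrArg _ h
        push_cast at h'
        linear_combination (-1 : ℤ) ^ t * h'
    _ = if j = m then 1 else 0 := by
        rw [Int.alternating_sum_range_choose]
        by_cases h : j = m
        · simp [h]
        · rw [if_neg (by omega), if_neg h, mul_zero]

theorem sum_inverseBinomialTransform_mul_choose (g : ℕ → ℤ) {m n : ℕ} (hm : m ∈ Icc 1 n) :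
    ∑ k ∈ Icc 1 n, (∑ j ∈ Icc 1 k, (-1 : ℤ) ^ (k - j) * k.choose j * g j) * m.choose k
      = g m := by
  simp_rw [sum_mul]
  rw [sum_comm' (t' := Icc 1 n) (s' := fun j => Icc j n) (by intros; simp; omega)]
  calc ∑ j ∈ Icc 1 n, ∑ k ∈ Icc j n, (-1 : ℤ) ^ (k - j) * k.choose j * g j * m.choose k
      = ∑ j ∈ Icc 1 n, g j * if j = m then 1 else 0 := by
        refine sum_congr rfl fun j _ => ?_
        rw [← sum_Icc_neg_one_pow_choose_mul_choose (mem_Icc.1 hm).2, mul_sum]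
        exact sum_congr rfl fun k _ => by ring
    _ = g m := by simp [hm]

section Indices

variable {α : Type*} {n : ℕ} (A : Fin n → Set α)

open Classical in
noncomputable def indicesOf (x : α) : Finset (Fin n) := univ.filter (x ∈ A ·)

variable {A}

@[simp]
theorem mem_indicesOf {x : α} {i : Fin n} : i ∈ indicesOf A x ↔ x ∈ A i := by
  simp [indicesOf]

theorem indicesOf_nonempty_iff {x : α} : (indicesOf A x).Nonempty ↔ x ∈ ⋃ i, A i := by
  simp [Finset.Nonempty]

theorem mem_gset_iff_indicesOf_eq {I : Finset (Fin n)} (hI : I.Nonempty) {x : α} :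
    x ∈ gset A I ↔ indicesOf A x = I := by
  obtain ⟨i₀, hi₀⟩ := hI
  simp only [gset, Set.mem_inter_iff, Set.mem_iInter, Set.mem_sdiff, Set.mem_iUnion,
    Finset.mem_compl, Finset.ext_iff, mem_indicesOf]
  constructor
  · rintro ⟨hin, hout⟩ i
    exact ⟨fun hx => by_contra fun hi => (hout i hi).2 hx, hin i⟩
  · intro h
    exact ⟨fun i => (h i).2, fun i hi => ⟨⟨i₀, (h i₀).2 hi₀⟩, fun hx => hi ((h i).1 hx)⟩⟩

theorem fset_eq_filter (hA : (⋃ i, A i).Finite) {S : Finset (Finset (Fin n))}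
    (hS : ∀ I ∈ S, I.Nonempty) :
    fset A S = ↑(hA.toFinset.filter (indicesOf A · ∈ S)) := by
  ext x
  simp only [fset, Set.mem_iUnion, coe_filter, Set.Finite.mem_toFinset, Set.mem_ofPred_eq]
  constructor
  · rintro ⟨I, hI, hx⟩
    rw [mem_gset_iff_indicesOf_eq (hS I hI)] at hx
    exact ⟨Set.mem_iUnion.1 (indicesOf_nonempty_iff.1 (hx ▸ hS I hI)), hx ▸ hI⟩
  · rintro ⟨-, hx⟩
    exact ⟨_, hx, (mem_gset_iff_indicesOf_eq (hS _ hx)).2 rfl⟩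

theorem biInter_eq_filter (hA : (⋃ i, A i).Finite) {J : Finset (Fin n)} (hJ : J.Nonempty) :
    ⋂ j ∈ J, A j = ↑(hA.toFinset.filter (J ⊆ indicesOf A ·)) := by
  obtain ⟨j₀, hj₀⟩ := hJ
  ext x
  simp only [Set.mem_iInter, coe_filter, Set.Finite.mem_toFinset, Set.mem_ofPred_eq,
    Set.mem_iUnion, Finset.subset_iff, mem_indicesOf]
  exact ⟨fun h => ⟨⟨j₀, h j₀ hj₀⟩, h⟩, fun h => h.2⟩

theorem icard_eq_sum_choose (hA : (⋃ i, A i).Finite) {k : ℕ} (hk : k ≠ 0) :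
    icard A k = ∑ x ∈ hA.toFinset, (indicesOf A x).card.choose k := by
  classical
  have hcard : ∀ J ∈ powersetCard k (univ : Finset (Fin n)),
      (⋂ j ∈ J, A j).ncard = #(hA.toFinset.bipartiteAbove (· ⊆ indicesOf A ·) J) := by
    intro J hJ
    have hJ : J.Nonempty := card_pos.1 ((mem_powersetCard.1 hJ).2 ▸ Nat.pos_of_ne_zero hk)
    rw [biInter_eq_filter hA hJ, Set.ncard_coe_finset]
    rfl
  rw [icard, sum_congr rfl hcard, sum_card_bipartiteAbove_eq_sum_card_bipartiteBelow]
  refine sum_congr rfl fun x _ => ?_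
  rw [← card_powersetCard]
  congr 1
  ext J
  simp [bipartiteBelow, mem_powersetCard, and_comm]

end Indices

theorem stmt_15_general {α : Type*} {n : ℕ} (A : Fin n → Set α) (hA : ∀ i, (A i).Finite)
    (C : Finset ℕ) (f : ℕ → ℤ)
    (hf : ∀ j, f j = if j ∈ C then 1 else 0) :
    ((fset A (Finset.univ.filter
        (fun I : Finset (Fin n) => I ≠ ∅ ∧ I.card ∈ C))).ncard : ℤ)
      = ∑ k ∈ Finset.Icc 1 n,
          (∑ j ∈ Finset.Icc 1 k, (-1 : ℤ) ^ (k - j) * (k.choose j) * f j)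
            * icard A k := by
  have hU : (⋃ i, A i).Finite := Set.finite_iUnion hA
  have hne : ∀ x ∈ hU.toFinset, (indicesOf A x).Nonempty :=
    fun x hx => indicesOf_nonempty_iff.2 (hU.mem_toFinset.1 hx)
  calc _ = ∑ x ∈ hU.toFinset, f (indicesOf A x).card := by
        rw [fset_eq_filter hU fun I hI => nonempty_iff_ne_empty.2 (mem_filter.1 hI).2.1,
          Set.ncard_coe_finset, card_filter, Nat.cast_sum]
        refine sum_congr rfl fun x hx => ?_
        simp [hf, (hne x hx).ne_empty]
    _ = ∑ x ∈ hU.toFinset, ∑ k ∈ Icc 1 n,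
          (∑ j ∈ Icc 1 k, (-1 : ℤ) ^ (k - j) * k.choose j * f j) * (indicesOf A x).card.choose k :=
        sum_congr rfl fun x hx => (sum_inverseBinomialTransform_mul_choose f <| mem_Icc.2
          ⟨card_pos.2 (hne x hx), (card_le_univ _).trans_eq (Fintype.card_fin n)⟩).symm
    _ = _ := by
        rw [sum_comm]
        refine sum_congr rfl fun k hk => ?_
        rw [icard_eq_sum_choose hU (by simp at hk; omega), Nat.cast_sum, mul_sum]

theorem stmt_15 {α : Type*} {n : ℕ} (A : Fin n → Set α) (hA : ∀ i, (A i).Finite)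
    (C : Finset ℕ) (hC : C ⊆ Finset.Icc 1 n) (f : ℕ → ℤ)
    (hf : ∀ j, f j = if j ∈ C then 1 else 0) :
    ((fset A (Finset.univ.filter
        (fun I : Finset (Fin n) => I ≠ ∅ ∧ I.card ∈ C))).ncard : ℤ)
      = ∑ k ∈ Finset.Icc 1 n,
          (∑ j ∈ Finset.Icc 1 k, (-1 : ℤ) ^ (k - j) * (k.choose j) * f j)
            * icard A k :=
  stmt_15_general A hA C f hf
end

section
/- Generalized inclusion-exclusion: for any finite sets A_1,...,A_n and 1 ≤ m ≤ n, the number of elements x belonging to at least m of the sets A_1,...,A_n equals Σ_{k=m}^{n} (-1)^{k-m} C(k-1, k-m) i_{n,k}(A). -/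
open Finset

/-!
Each point `x` of the finite union lies in exactly `d(x) = #{j | x ∈ A j} ≤ n` of the sets, so it
contributes `C(d(x), k)` to `i_{n,k}(A)` for `k ≥ 1`. The theorem therefore reduces to the identity
`∑_{k=m}^{n} (-1)^{k-m} C(k-1, k-m) C(d, k) = [m ≤ d]` for `d ≤ n`, which follows by induction on `d`
via Pascal's rule: the increment is the binomial inversion identity
`∑_k (-1)^{k-r} C(d, k) C(k, r) = [d = r]`.
-/

lemma sum_range_neg_one_pow_mul_choose_of_lt {e L : ℕ} (h : e < L) :
    ∑ i ∈ range L, (-1 : ℤ) ^ i * e.choose i = if e = 0 then 1 else 0 := by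
  rw [← Int.alternating_sum_range_choose]
  refine (sum_subset (range_subset_range.2 h) fun i _ hi => ?_).symm
  rw [Nat.choose_eq_zero_of_lt (by simpa using hi), Nat.cast_zero, mul_zero]

lemma sum_range_neg_one_pow_mul_choose_mul_choose {d r L : ℕ} (h : d < r + L) :
    ∑ i ∈ range L, (-1 : ℤ) ^ i * d.choose (r + i) * (r + i).choose r
      = if d = r then 1 else 0 := by
  by_cases hrd : r ≤ d
  · have hterm : ∀ i ∈ range L, (-1 : ℤ) ^ i * d.choose (r + i) * (r + i).choose r
        = d.choose r * ((-1) ^ i * (d - r).choose i) := fun i _ => by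
      rw [mul_assoc, ← Nat.cast_mul, Nat.choose_mul (Nat.le_add_right r i),
        Nat.add_sub_cancel_left]
      push_cast; ring
    rw [sum_congr rfl hterm, ← mul_sum, sum_range_neg_one_pow_mul_choose_of_lt (by omega)]
    rcases hrd.eq_or_lt with rfl | hlt
    · simp
    · simp [hlt.ne', (Nat.sub_pos_of_lt hlt).ne']
  · rw [if_neg (by omega)]
    exact sum_eq_zero fun i _ => by rw [Nat.choose_eq_zero_of_lt (by omega)]; simp

lemma sum_range_neg_one_pow_mul_choose_add_mul_choose {d r L : ℕ} (h : d ≤ r + L) :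
    ∑ i ∈ range L, (-1 : ℤ) ^ i * (r + i).choose i * d.choose (r + i + 1)
      = if r < d then 1 else 0 := by
  induction d with
  | zero => simp
  | succ d ih =>
    simp only [Nat.choose_succ_succ', Nat.cast_add, mul_add, sum_add_distrib]
    rw [ih (by omega)]
    simp_rw [← Nat.choose_symm_add, mul_right_comm _ _ ((d.choose _ : ℕ) : ℤ)]
    rw [sum_range_neg_one_pow_mul_choose_mul_choose (by omega)]
    split_ifs <;> omega

theorem sum_Icc_neg_one_pow_mul_choose_sub_one_mul_choose {m d n : ℕ} (hm : 1 ≤ m) (hd : d ≤ n) :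
    ∑ k ∈ Icc m n, (-1 : ℤ) ^ (k - m) * (k - 1).choose (k - m) * d.choose k
      = if m ≤ d then 1 else 0 := by
  obtain ⟨r, rfl⟩ : ∃ r, m = r + 1 := ⟨m - 1, by omega⟩
  rw [← Finset.Ico_add_one_right_eq_Icc, sum_Ico_eq_sum_range]
  refine (sum_congr rfl fun i _ => ?_).trans
    (sum_range_neg_one_pow_mul_choose_add_mul_choose (d := d) (r := r) (by omega))
  rw [show r + 1 + i - 1 = r + i by omega, show r + 1 + i - (r + 1) = i by omega, add_right_comm]

section
variable {α ι : Type*} {A : ι → Set α} {u : Finset α}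

lemma ncard_setOf_le_ncard_eq_card_filter {m : ℕ} (hm : 1 ≤ m) (hu : ∀ i, A i ⊆ u) :
    {x : α | m ≤ {j | x ∈ A j}.ncard}.ncard = #{x ∈ u | m ≤ {j | x ∈ A j}.ncard} := by
  rw [← Set.ncard_coe_finset, coe_filter]
  congr 1
  ext x
  refine ⟨fun hx => ⟨?_, hx⟩, And.right⟩
  obtain ⟨j, hj⟩ := Set.nonempty_of_ncard_ne_zero (s := {j | x ∈ A j}) (Nat.one_le_iff_ne_zero.1 (hm.trans hx))
  exact hu j hj

lemma sum_powersetCard_ncard_iInter [Fintype ι] {k : ℕ} (hk : 1 ≤ k) (hu : ∀ i, A i ⊆ u) :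
    ∑ J ∈ powersetCard k (univ : Finset ι), (⋂ j ∈ J, A j).ncard
      = ∑ x ∈ u, {j | x ∈ A j}.ncard.choose k := by
  classical
  have hinter : ∀ J ∈ powersetCard k (univ : Finset ι),
      (⋂ j ∈ J, A j).ncard = #{x ∈ u | ∀ j ∈ J, x ∈ A j} := fun J hJ => by
    obtain ⟨j₀, hj₀⟩ := card_pos.1 (by rw [(mem_powersetCard.1 hJ).2]; omega)
    rw [← Set.ncard_coe_finset, coe_filter]
    congr 1
    ext x
    simp only [Set.mem_iInter, Set.mem_ofPred]
    exact ⟨fun hx => ⟨hu j₀ (hx j₀ hj₀), hx⟩, And.right⟩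
  have hsubsets : ∀ x ∈ u, #{J ∈ powersetCard k univ | ∀ j ∈ J, x ∈ A j}
      = {j | x ∈ A j}.ncard.choose k := fun x _ => by
    have hdeg : {j | x ∈ A j}.ncard = #{j | x ∈ A j} := by
      rw [← Set.ncard_coe_finset, coe_filter_univ]
    rw [hdeg, ← card_powersetCard]
    congr 1
    ext J
    simp [subset_iff, and_comm]
  rw [sum_congr rfl hinter]
  exact (sum_card_bipartiteAbove_eq_sum_card_bipartiteBelow
    (r := fun J x => ∀ j ∈ J, x ∈ A j)).trans (sum_congr rfl hsubsets)
end

theorem stmt_16_general {α : Type*} {n : ℕ} (A : Fin n → Set α) (hA : ∀ i, (A i).Finite)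
    (m : ℕ) (hm1 : 1 ≤ m) :
    ({x : α | m ≤ {j : Fin n | x ∈ A j}.ncard}.ncard : ℤ)
      = ∑ k ∈ Finset.Icc m n,
          (-1 : ℤ) ^ (k - m) * ((k - 1).choose (k - m)) * icard A k := by
  set u := (Set.finite_iUnion hA).toFinset
  have hu : ∀ i, A i ⊆ u := fun i => by simpa [u] using Set.subset_iUnion A i
  have hdeg : ∀ x, {j | x ∈ A j}.ncard ≤ n := fun x =>
    (Set.ncard_le_card _).trans_eq (Nat.card_fin n)
  rw [ncard_setOf_le_ncard_eq_card_filter hm1 hu, natCast_card_filter]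
  calc ∑ x ∈ u, (if m ≤ {j | x ∈ A j}.ncard then 1 else 0 : ℤ)
      = ∑ x ∈ u, ∑ k ∈ Icc m n,
          (-1 : ℤ) ^ (k - m) * (k - 1).choose (k - m) * {j | x ∈ A j}.ncard.choose k :=
        sum_congr rfl fun x _ => (sum_Icc_neg_one_pow_mul_choose_sub_one_mul_choose hm1 (hdeg x)).symm
    _ = ∑ k ∈ Icc m n, (-1 : ℤ) ^ (k - m) * (k - 1).choose (k - m) * icard A k := by
        rw [sum_comm]
        refine sum_congr rfl fun k hk => ?_
        rw [icard, sum_powersetCard_ncard_iInter (hm1.trans (mem_Icc.1 hk).1) hu, Nat.cast_sum,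
          mul_sum]

theorem stmt_16 {α : Type*} {n : ℕ} (A : Fin n → Set α) (hA : ∀ i, (A i).Finite)
    (m : ℕ) (hm1 : 1 ≤ m) (hm2 : m ≤ n) :
    ({x : α | m ≤ {j : Fin n | x ∈ A j}.ncard}.ncard : ℤ)
      = ∑ k ∈ Finset.Icc m n,
          (-1 : ℤ) ^ (k - m) * ((k - 1).choose (k - m)) * icard A k :=
  stmt_16_general A hA m hm1
end

section
/- For any finite sets A_1,...,A_n, the number of elements x of A_1 ∪...∪ A_n that belong to an even number of the sets A_j equals Σ_{k=1}^{n} (-1)^k (2^{k-1} − 1) i_{n,k}(A). -/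
open Finset

/-!
A point lying in exactly `d ≥ 1` of the sets is counted `d.choose k` times by `icard A k`, so the
right-hand side is a sum over the union of `∑ k, (-1) ^ k (2 ^ (k - 1) - 1) (d.choose k)`.
By the binomial theorem at `-2` and `-1` this is `((-1) ^ d + 1) / 2`, the indicator of `d` even.
-/

theorem sum_Icc_one_pow_mul_choose {R : Type*} [CommRing R] (x : R) {d n : ℕ} (hdn : d ≤ n) :
    ∑ k ∈ Icc 1 n, x ^ k * (d.choose k : R) = (1 + x) ^ d - 1 := by
  have hbinom : (1 + x) ^ d = ∑ k ∈ range (n + 1), x ^ k * (d.choose k : R) := by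
    rw [add_comm, add_pow]
    simp only [one_pow, mul_one]
    exact sum_subset (range_subset_range.2 (by omega)) fun k _ hk => by
      simp [Nat.choose_eq_zero_of_lt (by simpa using hk : d < k)]
  rw [hbinom, range_eq_Ico, sum_eq_sum_Ico_succ_bot (by omega), Ico_add_one_right_eq_Icc]
  simp

theorem sum_Icc_neg_one_pow_mul_two_pow_sub_one_mul_choose {d n : ℕ} (hd : d ≠ 0)
    (hdn : d ≤ n) :
    ∑ k ∈ Icc 1 n, (-1 : ℤ) ^ k * (2 ^ (k - 1) - 1) * d.choose k =
      if Even d then 1 else 0 := by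
  -- `2 (2 ^ (k - 1) - 1) = 2 ^ k - 2` turns the sum into binomial expansions at `-2` and `-1`.
  have htwice : 2 * ∑ k ∈ Icc 1 n, (-1 : ℤ) ^ k * (2 ^ (k - 1) - 1) * d.choose k =
      ∑ k ∈ Icc 1 n, (-2 : ℤ) ^ k * d.choose k -
        2 * ∑ k ∈ Icc 1 n, (-1 : ℤ) ^ k * d.choose k := by
    rw [mul_sum, mul_sum, ← sum_sub_distrib]
    refine sum_congr rfl fun k hk => ?_
    obtain ⟨j, rfl⟩ := Nat.exists_eq_add_of_le' (mem_Icc.1 hk).1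
    simp only [Nat.add_sub_cancel, pow_succ, neg_pow (2 : ℤ)]
    ring
  rw [sum_Icc_one_pow_mul_choose _ hdn, sum_Icc_one_pow_mul_choose _ hdn] at htwice
  rcases Nat.even_or_odd d with heven | hodd
  · norm_num [heven.neg_one_pow, zero_pow hd] at htwice
    simpa [heven] using htwice
  · norm_num [hodd.neg_one_pow, zero_pow hd, Nat.not_even_iff_odd.2 hodd] at htwice ⊢
    linarith

open Classical in
theorem sum_powersetCard_ncard_biInter {α ι : Type*} [Fintype ι] (A : ι → Set α)
    (s : Finset α) (hs : ∀ i, A i ⊆ s) {k : ℕ} (hk : k ≠ 0) :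
    ∑ J ∈ powersetCard k univ, (⋂ j ∈ J, A j).ncard =
      ∑ x ∈ s, (#{j | x ∈ A j}).choose k := by
  have hcount : ∀ J ∈ powersetCard k (univ : Finset ι),
      (⋂ j ∈ J, A j).ncard = ∑ x ∈ s, if ∀ j ∈ J, x ∈ A j then 1 else 0 := by
    intro J hJ
    obtain ⟨j₀, hj₀⟩ : J.Nonempty :=
      card_pos.1 <| (mem_powersetCard.1 hJ).2 ▸ Nat.pos_of_ne_zero hk
    have : (⋂ j ∈ J, A j) = ↑({x ∈ s | ∀ j ∈ J, x ∈ A j}) := by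
      ext x
      simp only [Set.mem_iInter, coe_filter, Set.mem_ofPred_eq]
      exact ⟨fun h => ⟨hs j₀ (h j₀ hj₀), h⟩, And.right⟩
    rw [this, Set.ncard_coe_finset, card_filter]
  rw [sum_congr rfl hcount, sum_comm]
  refine sum_congr rfl fun x _ => ?_
  rw [← card_filter, ← card_powersetCard]
  congr 1
  ext J
  simp [subset_iff, and_comm]

theorem stmt_17 {α : Type*} {n : ℕ} (A : Fin n → Set α) (hA : ∀ i, (A i).Finite) :
    (({x ∈ ⋃ i, A i | Even {j : Fin n | x ∈ A j}.ncard}).ncard : ℤ)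
      = ∑ k ∈ Finset.Icc 1 n,
          (-1 : ℤ) ^ k * (2 ^ (k - 1) - 1) * icard A k := by
  classical
  set s := (Set.finite_iUnion hA).toFinset
  have hs : ∀ i, A i ⊆ s := fun i => by simpa [s] using Set.subset_iUnion A i
  have hdeg : ∀ x ∈ s, #{j | x ∈ A j} ≠ 0 ∧ #{j | x ∈ A j} ≤ n := fun x hx => by
    refine ⟨?_, card_le_univ _ |>.trans_eq (Fintype.card_fin n)⟩
    obtain ⟨i, hi⟩ := Set.mem_iUnion.1 ((Set.Finite.mem_toFinset _).1 hx)
    exact (card_pos.2 ⟨i, by simpa using hi⟩).ne'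
  have hlhs : {x ∈ ⋃ i, A i | Even {j : Fin n | x ∈ A j}.ncard} =
      ↑({x ∈ s | Even #{j | x ∈ A j}}) := by
    ext x
    simp [s, ← Set.ncard_coe_finset]
  calc _ = ∑ x ∈ s, if Even #{j | x ∈ A j} then (1 : ℤ) else 0 := by
          rw [hlhs, Set.ncard_coe_finset, sum_boole]
    _ = ∑ x ∈ s, ∑ k ∈ Icc 1 n,
          (-1 : ℤ) ^ k * (2 ^ (k - 1) - 1) * (#{j | x ∈ A j}).choose k :=
          sum_congr rfl fun x hx =>
            (sum_Icc_neg_one_pow_mul_two_pow_sub_one_mul_choose (hdeg x hx).1 (hdeg x hx).2).symm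
    _ = _ := by
          rw [sum_comm]
          refine sum_congr rfl fun k hk => ?_
          rw [icard, sum_powersetCard_ncard_biInter A s hs (by grind), ← mul_sum]
          push_cast
          rfl
end
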